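/- If P(lim_{|k|→∞} ‖Y_k‖ = 0) = 1, then ϑ := P(sup_{j≥1} ‖Y_j‖ ≤ 1) > 0. -/

import Mathlib

/-!
If `ϑ = 0`, the tail measure gives no mass to the set `S` of sequences whose last exceedance of
the unit ball happens at time `0`, hence, by shift invariance, none to any of its shifts. But a
sequence exceeding `1` at time `0` and vanishing at infinity has a last exceedance, at some time
`m`, so it lies in a shift of `S`. Thus `P(Y_k → 0) = ν({‖y_0‖ > 1, y_k → 0}) = 0`, a contradiction.
-/

open MeasureTheory ProbabilityTheory Set Filter
open scoped ENNReal NNReal Topology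

noncomputable section

/-- The iterated backshift operator: `(B^k x) j = x (j - k)`. -/
def backshift {V : Type*} (k : ℤ) (x : ℤ → V) : ℤ → V := fun j => x (j - k)

section Backshift

variable {V : Type*}

@[simp]
lemma backshift_apply (k : ℤ) (x : ℤ → V) (j : ℤ) : backshift k x j = x (j - k) := rfl

lemma backshift_zero : backshift (V := V) 0 = id := by
  funext x j
  simp

lemma backshift_comp_backshift (a b : ℤ) :
    backshift (V := V) a ∘ backshift b = backshift (a + b) := by
  funext x j
  simp only [Function.comp_apply, backshift_apply, sub_sub]

variable [MeasurableSpace V]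

@[fun_prop]
lemma measurable_backshift (k : ℤ) : Measurable (backshift (V := V) k) :=
  measurable_pi_lambda _ fun j => measurable_pi_apply (j - k)

lemma measurePreserving_backshift {ν : Measure (ℤ → V)}
    (h : MeasurePreserving (backshift 1) ν ν) (k : ℤ) : MeasurePreserving (backshift k) ν ν := by
  have hneg : MeasurePreserving (backshift (-1)) ν ν := by
    refine ⟨measurable_backshift _, ?_⟩
    conv_lhs => rw [← h.map_eq]
    rw [Measure.map_map (measurable_backshift _) (measurable_backshift _),
      backshift_comp_backshift, neg_add_cancel, backshift_zero, Measure.map_id]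
  induction k using Int.induction_on with
  | zero => simpa only [backshift_zero] using MeasurePreserving.id ν
  | succ k ih => simpa only [backshift_comp_backshift, add_comm] using h.comp ih
  | pred k ih => simpa only [backshift_comp_backshift, neg_add_eq_sub] using hneg.comp ih

end Backshift

lemma Int.exists_last_lt_of_tendsto_cofinite {f : ℤ → ℝ} (hf : Tendsto f cofinite (𝓝 0))
    {c : ℝ} (hc : 0 < c) {i : ℤ} (hi : c < f i) : ∃ m, c < f m ∧ ∀ j, m < j → f j ≤ c := by
  have hfin : {j | c < f j}.Finite := by
    refine (eventually_cofinite.mp (hf.eventually (eventually_lt_nhds hc))).subset ?_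
    exact fun j hj => not_lt.mpr hj.le
  obtain ⟨m, hm, hmax⟩ := Int.exists_greatest_of_bdd
    (P := fun j => c < f j) (hfin.bddAbove) ⟨i, hi⟩
  exact ⟨m, hm, fun j hj => not_lt.mp fun hcj => (hmax j hcj).not_gt hj⟩

section TailSets

variable (V : Type*) [NormedAddCommGroup V]

def lastExceedanceAtZero : Set (ℤ → V) := {y | 1 < ‖y 0‖ ∧ ∀ j : ℤ, 1 ≤ j → ‖y j‖ ≤ 1}

def vanishingAtInfinity : Set (ℤ → V) := {y | Tendsto (fun k => ‖y k‖) cofinite (𝓝 0)}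

lemma vanishingAtInfinity_inter_subset_iUnion_backshift_preimage :
    vanishingAtInfinity V ∩ {y | 1 < ‖y 0‖} ⊆
      ⋃ k : ℤ, backshift k ⁻¹' lastExceedanceAtZero V := by
  rintro y ⟨hy, hy0⟩
  obtain ⟨m, hm, hlast⟩ := Int.exists_last_lt_of_tendsto_cofinite hy one_pos hy0
  refine mem_iUnion.mpr ⟨-m, ?_, fun j hj => hlast _ (by omega)⟩
  simpa only [backshift_apply, zero_sub, neg_neg] using hm

variable [MeasurableSpace V] [BorelSpace V]

lemma measurableSet_lastExceedanceAtZero : MeasurableSet (lastExceedanceAtZero V) := by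
  simp only [lastExceedanceAtZero, ofPred_and, ofPred_forall]
  exact (measurableSet_lt measurable_const (measurable_pi_apply 0).norm).inter
    (.iInter fun j => .iInter fun _ => measurableSet_le (measurable_pi_apply j).norm measurable_const)

lemma measurableSet_vanishingAtInfinity : MeasurableSet (vanishingAtInfinity V) := by
  have : (cofinite : Filter ℤ).IsCountablyGenerated := by
    rw [Int.cofinite_eq]
    infer_instance
  exact measurableSet_tendsto _ fun k => (measurable_pi_apply k).norm

lemma measure_lastExceedanceAtZero_pos {ν : Measure (ℤ → V)}
    (hν : MeasurePreserving (backshift 1) ν ν)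
    (hvan : ν (vanishingAtInfinity V ∩ {y | 1 < ‖y 0‖}) ≠ 0) :
    0 < ν (lastExceedanceAtZero V) := by
  refine pos_iff_ne_zero.mpr fun hS => hvan (measure_mono_null
    (vanishingAtInfinity_inter_subset_iUnion_backshift_preimage V) (measure_iUnion_null fun k => ?_))
  rw [(measurePreserving_backshift hν k).measure_preimage (measurableSet_lastExceedanceAtZero V).nullMeasurableSet,
    hS]

end TailSets

theorem statement9_general
    -- `V` plays the role of `ℝ^d` (`d ≥ 1`) equipped with an arbitrary norm
    {V : Type*} [NormedAddCommGroup V]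
    [MeasurableSpace V] [BorelSpace V]
    -- the tail measure and its properties
    (ν : Measure (ℤ → V))
    (hνshift : ν.map (backshift 1) = ν)
    -- the tail process `Y` and the spectral tail process `Θ`
    {Ω : Type*} [MeasurableSpace Ω] (P : Measure Ω)
    (Y : Ω → ℤ → V) (hYmeas : Measurable Y)
    (hYlaw : P.map Y = ν.restrict {y : ℤ → V | 1 < ‖y 0‖})
    -- the statement
    (hY0 : P {ω | Tendsto (fun k : ℤ => ‖Y ω k‖) cofinite (𝓝 0)} = 1) :
    0 < P {ω | ∀ j : ℤ, 1 ≤ j → ‖Y ω j‖ ≤ 1} := by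
  have hlaw {A : Set (ℤ → V)} (hA : MeasurableSet A) :
      P (Y ⁻¹' A) = ν (A ∩ {y | 1 < ‖y 0‖}) := by
    rw [← Measure.map_apply hYmeas hA, hYlaw, Measure.restrict_apply hA]
  have hvan : ν (vanishingAtInfinity V ∩ {y | 1 < ‖y 0‖}) ≠ 0 := by
    rw [← hlaw (measurableSet_vanishingAtInfinity V)]
    exact hY0 ▸ one_ne_zero
  have hS := measure_lastExceedanceAtZero_pos V ⟨measurable_backshift 1, hνshift⟩ hvan
  calc 0 < ν (lastExceedanceAtZero V) := hS
    _ = P (Y ⁻¹' lastExceedanceAtZero V) := by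
      rw [hlaw (measurableSet_lastExceedanceAtZero V), inter_eq_left.mpr fun y hy => hy.1]
    _ ≤ P {ω | ∀ j : ℤ, 1 ≤ j → ‖Y ω j‖ ≤ 1} := measure_mono fun ω hω => hω.2

/-- **Positivity of the candidate extremal index.**
If `P(lim_{|k|→∞} ‖Y_k‖ = 0) = 1`, then `ϑ := P(sup_{j≥1} ‖Y_j‖ ≤ 1) > 0`. -/
theorem statement9
    -- `V` plays the role of `ℝ^d` (`d ≥ 1`) equipped with an arbitrary norm
    {V : Type*} [NormedAddCommGroup V] [NormedSpace ℝ V] [FiniteDimensional ℝ V]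
    [Nontrivial V] [MeasurableSpace V] [BorelSpace V]
    (α : ℝ) (hα : 0 < α)
    -- the tail measure and its properties
    (ν : Measure (ℤ → V))
    (hν0 : ν {0} = 0)
    (hν1 : ν {y : ℤ → V | 1 < ‖y 0‖} = 1)
    (hνshift : ν.map (backshift 1) = ν)
    (hνhom : ∀ A : Set (ℤ → V), MeasurableSet A → ∀ c : ℝ, 0 < c →
      ν ((fun x => c • x) '' A) = ENNReal.ofReal (c ^ (-α)) * ν A)
    -- the tail process `Y` and the spectral tail process `Θ`
    {Ω : Type*} [MeasurableSpace Ω] (P : Measure Ω) [IsProbabilityMeasure P]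
    (Y : Ω → ℤ → V) (hYmeas : Measurable Y)
    (hYlaw : P.map Y = ν.restrict {y : ℤ → V | 1 < ‖y 0‖})
    (Θ : Ω → ℤ → V) (hΘdef : ∀ ω, Θ ω = ‖Y ω 0‖⁻¹ • Y ω)
    (hPareto : ∀ u : ℝ, 1 ≤ u → P {ω | u < ‖Y ω 0‖} = ENNReal.ofReal (u ^ (-α)))
    (hindep : IndepFun (fun ω => ‖Y ω 0‖) Θ P)
    (hpolar : ∀ H : (ℤ → V) → ℝ≥0∞, Measurable H →
      ∫⁻ y in {y : ℤ → V | y 0 ≠ 0}, H y ∂ν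
        = ∫⁻ r in Ioi (0 : ℝ),
            (∫⁻ ω, H (r • Θ ω) ∂P) * ENNReal.ofReal (α * r ^ (-α - 1)))
    -- the statement
    (hY0 : P {ω | Tendsto (fun k : ℤ => ‖Y ω k‖) cofinite (𝓝 0)} = 1) :
    0 < P {ω | ∀ j : ℤ, 1 ≤ j → ‖Y ω j‖ ≤ 1} :=
  statement9_general ν hνshift P Y hYmeas hYlaw hY0
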